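/- arXiv:2510.01372 — 6 statements merged into one kernel-verified Lean document; each statement's English description precedes it below -/
import Mathlib

section
/- For every integer q ≥ 2, the integrals I_{−q} = ∫_{1/4}^{1} t^{−q} (4t−1)^{−1/2} dt satisfy the recurrence I_{−q} = √3/(q−1) + (2(2q−3)/(q−1)) · I_{−(q−1)}. -/
open intervalIntegral Real MeasureTheory Set

/-! Integrating the derivative of `√(4t - 1) · t ^ m` over `[1/4, b]` gives
`2 (2m + 1) I_m - m I_{m-1} = √(4b - 1) · b ^ m`, where `I_m = ∫ t ^ m / √(4t - 1)`;
the recurrence is the case `m = 1 - q`, `b = 1`. -/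

lemma hasDerivAt_sqrt_four_mul_sub_one {t : ℝ} (ht : 1 / 4 < t) :
    HasDerivAt (fun t => √(4 * t - 1)) (2 / √(4 * t - 1)) t := by
  have hpos : 4 * t - 1 ≠ 0 := by linarith
  refine ((((hasDerivAt_id' t).const_mul 4).sub_const 1).sqrt
    (by simpa using hpos)).congr_deriv ?_
  field_simp
  norm_num

lemma hasDerivAt_sqrt_four_mul_sub_one_mul_zpow (m : ℤ) {t : ℝ} (ht : 1 / 4 < t) :
    HasDerivAt (fun t => √(4 * t - 1) * t ^ m)
      ((2 * (2 * m + 1) * t ^ m - m * t ^ (m - 1)) / √(4 * t - 1)) t := by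
  have ht0 : t ≠ 0 := by linarith
  have hs : √(4 * t - 1) ≠ 0 := (sqrt_pos.mpr (by linarith)).ne'
  have hsq : √(4 * t - 1) ^ 2 = 4 * t - 1 := sq_sqrt (by linarith)
  refine ((hasDerivAt_sqrt_four_mul_sub_one ht).mul
    (hasDerivAt_zpow m t (Or.inl ht0))).congr_deriv ?_
  rw [zpow_sub_one₀ ht0]
  field_simp
  linear_combination (m : ℝ) * hsq

lemma intervalIntegrable_inv_sqrt_four_mul_sub_one {b : ℝ} (hb : 1 / 4 ≤ b) :
    IntervalIntegrable (fun t => (√(4 * t - 1))⁻¹) volume (1 / 4) b := by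
  refine intervalIntegrable_deriv_of_nonneg (g := fun t => √(4 * t - 1) / 2) (by fun_prop)
    (fun t ht => ?_) (fun t _ => by positivity)
  rw [min_eq_left hb] at ht
  exact ((hasDerivAt_sqrt_four_mul_sub_one ht.1).div_const 2).congr_deriv (by ring)

lemma intervalIntegrable_zpow_div_sqrt_four_mul_sub_one (m : ℤ) {b : ℝ} (hb : 1 / 4 ≤ b) :
    IntervalIntegrable (fun t => t ^ m / √(4 * t - 1)) volume (1 / 4) b := by
  simpa only [div_eq_mul_inv] using
    (intervalIntegrable_inv_sqrt_four_mul_sub_one hb).continuousOn_mul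
      ((continuousOn_id' _).zpow₀ m fun t ht => Or.inl (by
        rw [uIcc_of_le hb] at ht
        exact (lt_of_lt_of_le (by norm_num) ht.1).ne'))

theorem integral_zpow_div_sqrt_four_mul_sub_one_recurrence (m : ℤ) {b : ℝ} (hb : 1 / 4 ≤ b) :
    2 * (2 * m + 1) * (∫ t in (1 / 4)..b, t ^ m / √(4 * t - 1)) -
        m * ∫ t in (1 / 4)..b, t ^ (m - 1) / √(4 * t - 1) =
      √(4 * b - 1) * b ^ m := by
  have hI := intervalIntegrable_zpow_div_sqrt_four_mul_sub_one m hb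
  have hI' := intervalIntegrable_zpow_div_sqrt_four_mul_sub_one (m - 1) hb
  have hcont : ContinuousOn (fun t => √(4 * t - 1) * t ^ m) (Icc (1 / 4) b) :=
    (by fun_prop : Continuous fun t : ℝ => √(4 * t - 1)).continuousOn.mul
      (continuousOn_id.zpow₀ m fun t ht => Or.inl (lt_of_lt_of_le (by norm_num) ht.1).ne')
  have hFTC := integral_eq_sub_of_hasDerivAt_of_le hb hcont
    (fun t ht => hasDerivAt_sqrt_four_mul_sub_one_mul_zpow m ht.1)
    (by simpa only [sub_div, mul_div_assoc] using (hI.const_mul _).sub (hI'.const_mul _))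
  simp only [sub_div, mul_div_assoc] at hFTC
  rw [integral_sub (hI.const_mul _) (hI'.const_mul _), intervalIntegral.integral_const_mul,
    intervalIntegral.integral_const_mul] at hFTC
  simpa using hFTC

/-- For every integer `q ≥ 2`, the integrals `I_{−q} = ∫_{1/4}^{1} t^{−q} (4t−1)^{−1/2} dt`
satisfy `I_{−q} = √3/(q−1) + (2(2q−3)/(q−1)) · I_{−(q−1)}`. -/
theorem integral_Im_recurrence (q : ℕ) (hq : 2 ≤ q) :
    ∫ t in (1/4 : ℝ)..1, t ^ (-(q : ℤ)) / Real.sqrt (4 * t - 1) =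
      Real.sqrt 3 / ((q : ℝ) - 1) +
        (2 * (2 * (q : ℝ) - 3) / ((q : ℝ) - 1)) *
          ∫ t in (1/4 : ℝ)..1, t ^ (-((q : ℤ) - 1)) / Real.sqrt (4 * t - 1) := by
  have hq1 : (q : ℝ) - 1 ≠ 0 := by
    have : (2 : ℝ) ≤ q := by exact_mod_cast hq
    linarith
  have key := integral_zpow_div_sqrt_four_mul_sub_one_recurrence (1 - q) (b := 1) (by norm_num)
  rw [show (1 - q : ℤ) - 1 = -q by ring, one_zpow, mul_one,
    show (4 : ℝ) * 1 - 1 = 3 by norm_num] at key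
  push_cast at key
  rw [show -((q : ℤ) - 1) = 1 - q by ring, div_mul_eq_mul_div, ← add_div, eq_div_iff hq1]
  linear_combination key
end

section
/- For every integer m (positive, zero, or negative) there exist rational numbers a and b such that ∫_{1/4}^{1} t^m (4t−1)^{−1/2} dt = a·√3 + b·π. -/
/-!
The substitution `t = (1 + u²) / 4` turns the integral into `(2 · 4^m)⁻¹ J_m` with
`J_m = ∫₀^√3 (1 + u²)^m du`. Differentiating `u (1 + u²)^m` gives the reduction formula
`(2m + 1) J_m - 2m J_{m-1} = √3 · 4^m`, and `J_{-1} = arctan √3 = π / 3`. Running the recurrence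
upwards and downwards from `m = -1` keeps `J_m` in the `ℚ`-span of `√3` and `π`.
-/

open intervalIntegral Real

lemma continuous_one_add_sq_zpow (m : ℤ) : Continuous fun u : ℝ => (1 + u ^ 2) ^ m :=
  (continuous_const.add (continuous_pow 2)).zpow₀ m fun u =>
    Or.inl (by positivity : (1 : ℝ) + u ^ 2 ≠ 0)

lemma hasDerivAt_mul_one_add_sq_zpow (m : ℤ) (u : ℝ) :
    HasDerivAt (fun u : ℝ => u * (1 + u ^ 2) ^ m)
      ((2 * m + 1) * (1 + u ^ 2) ^ m - 2 * m * (1 + u ^ 2) ^ (m - 1)) u := by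
  have hpos : 1 + u ^ 2 ≠ 0 := by positivity
  refine ((hasDerivAt_id u).mul
    ((hasDerivAt_zpow m _ (Or.inl hpos)).comp u ((hasDerivAt_pow 2 u).const_add 1))).congr_deriv ?_
  simp only [Function.comp_apply, id_eq, Nat.cast_ofNat, Nat.add_one_sub_one, pow_one,
    zpow_sub_one₀ hpos]
  field_simp
  ring

lemma integral_one_add_sq_zpow_reduction (m : ℤ) (x : ℝ) :
    (2 * m + 1) * (∫ u in 0..x, (1 + u ^ 2) ^ m)
      - 2 * m * ∫ u in 0..x, (1 + u ^ 2) ^ (m - 1) = x * (1 + x ^ 2) ^ m := by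
  have hint (n : ℤ) (c : ℝ) :
      IntervalIntegrable (fun u : ℝ => c * (1 + u ^ 2) ^ n) MeasureTheory.volume 0 x :=
    ((continuous_one_add_sq_zpow n).intervalIntegrable 0 x).const_mul c
  rw [← integral_const_mul, ← integral_const_mul, ← integral_sub (hint _ _) (hint _ _),
    integral_eq_sub_of_hasDerivAt (fun u _ => hasDerivAt_mul_one_add_sq_zpow m u)
      ((hint _ _).sub (hint _ _))]
  simp

lemma integral_one_add_sq_zpow_mem_span (m : ℤ) :
    ∫ u in 0..√3, (1 + u ^ 2) ^ m ∈ Submodule.span ℚ ({√3, π} : Set ℝ) := by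
  set J : ℤ → ℝ := fun n => ∫ u in 0..√3, (1 + u ^ 2) ^ n
  have hJ (n : ℤ) : (2 * n + 1) * J n - 2 * n * J (n - 1) = √3 * 4 ^ n := by
    rw [integral_one_add_sq_zpow_reduction]
    norm_num
  have hsqrt3 : √3 ∈ Submodule.span ℚ ({√3, π} : Set ℝ) := Submodule.subset_span (by simp)
  induction m using Int.inductionOn' (b := -1) with
  | zero =>
    have : J (-1) = (3⁻¹ : ℚ) • π := by
      simp only [J, zpow_neg_one, integral_inv_one_add_sq, arctan_sqrt_three, arctan_zero,
        Rat.smul_def]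
      push_cast
      ring
    show J (-1) ∈ _
    exact this ▸ Submodule.smul_mem _ _ (Submodule.subset_span (by simp))
  | succ k hk ih =>
    have : J (k + 1) = ((2 * k + 3 : ℚ)⁻¹ * 4 ^ (k + 1)) • √3
        + ((2 * k + 3 : ℚ)⁻¹ * (2 * k + 2)) • J k := by
      have := hJ (k + 1)
      have hk' : (2 * k + 3 : ℝ) ≠ 0 := by norm_cast; omega
      simp only [Rat.smul_def, add_sub_cancel_right] at this ⊢
      push_cast at this ⊢
      field_simp
      linear_combination this
    show J (k + 1) ∈ _
    exact this ▸ add_mem (Submodule.smul_mem _ _ hsqrt3) (Submodule.smul_mem _ _ ih)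
  | pred k hk ih =>
    have : J (k - 1) = ((2 * k + 1 : ℚ) / (2 * k)) • J k - ((2 * k : ℚ)⁻¹ * 4 ^ k) • √3 := by
      have := hJ k
      have hk' : (k : ℝ) ≠ 0 := by norm_cast; omega
      simp only [Rat.smul_def] at this ⊢
      push_cast at this ⊢
      field_simp
      linear_combination -this
    show J (k - 1) ∈ _
    exact this ▸ sub_mem (Submodule.smul_mem _ _ ih) (Submodule.smul_mem _ _ hsqrt3)

lemma integral_zpow_div_sqrt_four_mul_sub_one (m : ℤ) {x : ℝ} (hx : 0 ≤ x) :
    ∫ t in (1 / 4 : ℝ)..(1 + x ^ 2) / 4, t ^ m / √(4 * t - 1)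
      = (2 * 4 ^ m)⁻¹ * ∫ u in 0..x, (1 + u ^ 2) ^ m := by
  calc ∫ t in (1 / 4 : ℝ)..(1 + x ^ 2) / 4, t ^ m / √(4 * t - 1)
      = ∫ u in 0..x, ((1 + u ^ 2) / 4) ^ m / √(4 * ((1 + u ^ 2) / 4) - 1) * (u / 2) := by
        convert (integral_comp_mul_deriv_of_deriv_nonneg (g := fun t : ℝ => t ^ m / √(4 * t - 1))
          (f := fun u : ℝ => (1 + u ^ 2) / 4) (f' := fun u => u / 2) (a := 0) (b := x) (by fun_prop)
          (fun u _ => ((hasDerivAt_pow 2 u).const_add 1).div_const 4 |>.congr_deriv (by ring))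
          (fun u hu => by simp only [min_eq_left hx] at hu; linarith [hu.1])).symm using 2
        · norm_num
        · rfl
    _ = ∫ u in 0..x, (2 * 4 ^ m)⁻¹ * (1 + u ^ 2) ^ m := by
        refine integral_congr_ae (Filter.Eventually.of_forall fun u hu => ?_)
        have hu0 : 0 < u := (Set.uIoc_of_le hx ▸ hu).1
        rw [show 4 * ((1 + u ^ 2) / 4) - 1 = u ^ 2 by ring, sqrt_sq hu0.le, div_zpow]
        field_simp
    _ = (2 * 4 ^ m)⁻¹ * ∫ u in 0..x, (1 + u ^ 2) ^ m := integral_const_mul _ _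

/-- For every integer `m` there exist rationals `a`, `b` with
`∫_{1/4}^{1} t^m (4t−1)^{−1/2} dt = a·√3 + b·π`. -/
theorem integral_Im_mem_Q_sqrt3_pi (m : ℤ) :
    ∃ a b : ℚ, ∫ t in (1/4 : ℝ)..1, t ^ m / Real.sqrt (4 * t - 1) =
      (a : ℝ) * Real.sqrt 3 + (b : ℝ) * Real.pi := by
  have hsubst := integral_zpow_div_sqrt_four_mul_sub_one m (sqrt_nonneg 3)
  rw [sq_sqrt zero_le_three, show (1 + 3) / 4 = (1 : ℝ) by norm_num,
    show (2 * 4 ^ m)⁻¹ = (((2 * 4 ^ m)⁻¹ : ℚ) : ℝ) by push_cast; rfl, ← Rat.smul_def] at hsubst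
  obtain ⟨a, b, h⟩ := Submodule.mem_span_pair.1
    (Submodule.smul_mem _ ((2 * 4 ^ m)⁻¹ : ℚ) (integral_one_add_sq_zpow_mem_span m))
  exact ⟨a, b, by rw [hsubst, ← h, Rat.smul_def, Rat.smul_def]⟩
end

section
/- One has 𝒢(1,0) = −1. -/
open intervalIntegral Real Complex

/-- `u(t) = (−1 + i√(4t−1))/(2t)`. -/
noncomputable def uu (t : ℝ) : ℂ :=
  (-1 + Complex.I * (Real.sqrt (4 * t - 1) : ℝ)) / (2 * t)

/-- The renormalized Green's function of the triangular-lattice walk: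
`𝒢(x,y) = (3/π) ∫_{1/4}^{1} (4t−1)^{−1/2} ( t^y Σ_{j=1}^{x} C(x,j)(1−t)^{j−1} Re(u(t)^j)
  − Σ_{ℓ=0}^{y−1} t^ℓ ) dt`. -/
noncomputable def calG (x y : ℕ) : ℝ :=
  (3 / Real.pi) * ∫ t in (1/4 : ℝ)..1,
    (1 / Real.sqrt (4 * t - 1)) *
      (t ^ y * ∑ j ∈ Finset.Icc 1 x, (x.choose j : ℝ) * (1 - t) ^ (j - 1) * ((uu t) ^ j).re
        - ∑ l ∈ Finset.range y, t ^ l)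

/-!
For `x = 1, y = 0` the integrand is `Re u(t) / √(4t−1) = −1 / (2t√(4t−1))`, which is the
derivative of `−arctan √(4t−1)`. Hence `𝒢(1,0) = −(3/π) arctan √3 = −1`.
-/

lemma re_uu (t : ℝ) : (uu t).re = -(2 * t)⁻¹ := by
  rw [uu, show (2 * (t : ℂ)) = ((2 * t : ℝ) : ℂ) by push_cast; ring, Complex.div_ofReal_re]
  simp [neg_div]

lemma hasDerivAt_arctan_sqrt_four_mul_sub_one {t : ℝ} (ht : 1 / 4 < t) :
    HasDerivAt (fun t => Real.arctan √(4 * t - 1)) (2 * t * √(4 * t - 1))⁻¹ t := by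
  have hpos : 0 < 4 * t - 1 := by linarith
  have hsqrt : HasDerivAt (fun t => √(4 * t - 1)) (4 / (2 * √(4 * t - 1))) t := by
    simpa [mul_comm, mul_div_assoc] using
      (((hasDerivAt_id t).const_mul 4).sub_const 1).sqrt hpos.ne'
  refine ((Real.hasDerivAt_arctan _).comp t hsqrt).congr_deriv ?_
  have hs : 0 < √(4 * t - 1) := sqrt_pos.2 hpos
  rw [sq_sqrt hpos.le]
  field_simp
  ring

/-- The integrand is nonnegative, so its integrability comes for free from the antiderivative. -/
lemma integral_inv_mul_sqrt_four_mul_sub_one {b : ℝ} (hb : 1 / 4 ≤ b) :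
    ∫ t in (1/4 : ℝ)..b, (2 * t * √(4 * t - 1))⁻¹ = Real.arctan √(4 * b - 1) := by
  have hcont : ContinuousOn (fun t => Real.arctan √(4 * t - 1)) (Set.uIcc (1/4) b) := by fun_prop
  have hderiv : ∀ t ∈ Set.Ioo (1/4 : ℝ) b,
      HasDerivAt (fun t => Real.arctan √(4 * t - 1)) (2 * t * √(4 * t - 1))⁻¹ t :=
    fun t ht => hasDerivAt_arctan_sqrt_four_mul_sub_one ht.1
  have hnonneg : ∀ t ∈ Set.Ioo (1/4 : ℝ) b, 0 ≤ (2 * t * √(4 * t - 1))⁻¹ := fun t ht => by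
    have : 0 < t := by linarith [ht.1]
    positivity
  rw [integral_eq_sub_of_hasDerivAt_of_le hb (Set.uIcc_of_le hb ▸ hcont) hderiv
    (intervalIntegrable_deriv_of_nonneg hcont
      (by rwa [min_eq_left hb, max_eq_right hb]) (by rwa [min_eq_left hb, max_eq_right hb]))]
  norm_num

/-- `𝒢(1,0) = −1`. -/
theorem calG_one_zero : calG 1 0 = -1 := by
  have hintegrand : ∀ t : ℝ, (1 / √(4 * t - 1)) *
      (t ^ 0 * ∑ j ∈ Finset.Icc 1 1, ((1 : ℕ).choose j : ℝ) * (1 - t) ^ (j - 1) * ((uu t) ^ j).re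
        - ∑ l ∈ Finset.range 0, t ^ l) = -(2 * t * √(4 * t - 1))⁻¹ := fun t => by
    simp only [pow_zero, Finset.Icc_self, Finset.sum_singleton, Nat.choose_self, Nat.cast_one,
      pow_one, one_mul, Finset.range_zero, Finset.sum_empty, sub_zero, re_uu, mul_inv]
    ring
  rw [calG, funext hintegrand, intervalIntegral.integral_neg,
    integral_inv_mul_sqrt_four_mul_sub_one (by norm_num)]
  norm_num [arctan_sqrt_three, pi_ne_zero]
end

section
/- One has 𝒢(2,0) = (3√3)/π − 3. -/
open intervalIntegral Real Complex

/-!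
For `x = 2, y = 0` the bracket in `calG` is the rational function `(2t² − 5t + 1)/(2t²)`, since
`Re u = −1/(2t)` and `Re u² = (1 − 2t)/(2t²)`. With `s = √(4t − 1)` the integrand then has the
elementary primitive `s/2 − 3 arctan s + s/(2t)`, which vanishes at `t = 1/4` and equals `√3 − π`
at `t = 1` because `arctan √3 = π/3`.
-/

noncomputable def calGKernel (x y : ℕ) (t : ℝ) : ℝ :=
  t ^ y * ∑ j ∈ Finset.Icc 1 x, (x.choose j : ℝ) * (1 - t) ^ (j - 1) * ((uu t) ^ j).re
    - ∑ l ∈ Finset.range y, t ^ l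

lemma calG_eq_integral_calGKernel (x y : ℕ) :
    calG x y = (3 / π) * ∫ t in (1/4 : ℝ)..1, 1 / √(4 * t - 1) * calGKernel x y t :=
  rfl

lemma uu_eq_div_ofReal (t : ℝ) : uu t = (-1 + I * (√(4 * t - 1) : ℝ)) / ((2 * t : ℝ) : ℂ) := by
  rw [uu]
  push_cast
  rfl

lemma uu_re (t : ℝ) : (uu t).re = -1 / (2 * t) := by
  rw [uu_eq_div_ofReal, Complex.div_ofReal_re]
  simp

lemma uu_im (t : ℝ) : (uu t).im = √(4 * t - 1) / (2 * t) := by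
  rw [uu_eq_div_ofReal, Complex.div_ofReal_im]
  simp

lemma uu_sq_re {t : ℝ} (ht : 1 / 4 ≤ t) : ((uu t) ^ 2).re = (1 - 2 * t) / (2 * t ^ 2) := by
  have ht0 : t ≠ 0 := by positivity
  rw [pow_two, Complex.mul_re, uu_re, uu_im]
  field_simp
  ring_nf
  rw [Real.sq_sqrt (by linarith)]
  ring

lemma continuousOn_uu : ContinuousOn uu {t | t ≠ 0} := by
  unfold uu
  exact ContinuousOn.div (by fun_prop) (by fun_prop) fun t ht => by simpa using ht

lemma continuousOn_calGKernel (x y : ℕ) : ContinuousOn (calGKernel x y) {t | t ≠ 0} := by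
  unfold calGKernel
  have hre : ∀ j : ℕ, ContinuousOn (fun t => ((uu t) ^ j).re) {t | t ≠ 0} := fun j =>
    Complex.continuous_re.comp_continuousOn (continuousOn_uu.pow j)
  fun_prop

lemma calGKernel_two_zero {t : ℝ} (ht : 1 / 4 ≤ t) :
    calGKernel 2 0 t = (2 * t ^ 2 - 5 * t + 1) / (2 * t ^ 2) := by
  have ht0 : t ≠ 0 := by positivity
  rw [calGKernel, show Finset.Icc 1 2 = {1, 2} by rfl, Finset.sum_pair (by norm_num),
    pow_one, uu_re, uu_sq_re ht]
  simp only [pow_zero, Nat.choose_succ_self_right, Nat.reduceAdd, Nat.cast_ofNat, tsub_self, mul_one,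
    Nat.choose_self, Nat.cast_one, Nat.add_one_sub_one, pow_one, one_mul, Finset.range_zero,
    Finset.sum_empty, sub_zero]
  field_simp
  ring

-- For `x < 0` both sides are junk zeros: `√x = 0` and `x ^ (-1/2) = exp (…) * cos (π/2)`.
lemma one_div_sqrt_eq_rpow (x : ℝ) : 1 / √x = x ^ (-(1 / 2) : ℝ) := by
  rcases le_or_gt 0 x with hx | hx
  · rw [one_div, Real.sqrt_eq_rpow, ← Real.rpow_neg hx]
  · rw [Real.sqrt_eq_zero_of_nonpos hx.le, Real.rpow_def_of_neg hx]
    norm_num [show 1 / 2 * π = π / 2 by ring]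

lemma intervalIntegrable_one_div_sqrt_four_mul_sub_one (a b : ℝ) :
    IntervalIntegrable (fun t => 1 / √(4 * t - 1)) MeasureTheory.volume a b := by
  simp_rw [one_div_sqrt_eq_rpow]
  have h := ((intervalIntegrable_rpow' (a := 4 * a - 1) (b := 4 * b - 1)
    (by norm_num : (-1 : ℝ) < -(1 / 2))).comp_sub_right 1).comp_mul_left (c := 4)
  convert h using 1 <;> ring_nf

noncomputable def calGTwoZeroPrimitive (t : ℝ) : ℝ :=
  √(4 * t - 1) / 2 - 3 * Real.arctan √(4 * t - 1) + √(4 * t - 1) / (2 * t)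

lemma hasDerivAt_calGTwoZeroPrimitive {t : ℝ} (ht : 1 / 4 < t) :
    HasDerivAt calGTwoZeroPrimitive
      (1 / √(4 * t - 1) * ((2 * t ^ 2 - 5 * t + 1) / (2 * t ^ 2))) t := by
  have hpos : 0 < 4 * t - 1 := by linarith
  have hs2 : √(4 * t - 1) ^ 2 = 4 * t - 1 := Real.sq_sqrt hpos.le
  have hsqrt : HasDerivAt (fun t => √(4 * t - 1)) (4 / (2 * √(4 * t - 1))) t :=
    (((hasDerivAt_id t).const_mul 4).sub_const 1).sqrt hpos.ne' |>.congr_deriv (by simp)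
  refine (((hsqrt.div_const 2).sub (hsqrt.arctan.const_mul 3)).add
    (hsqrt.div ((hasDerivAt_id t).const_mul 2) (by positivity))).congr_deriv ?_
  rw [show (1 : ℝ) + √(4 * t - 1) ^ 2 = 4 * t by rw [hs2]; ring]
  simp only [id]
  field_simp
  linear_combination -2 * hs2

lemma continuousOn_calGTwoZeroPrimitive : ContinuousOn calGTwoZeroPrimitive {t | t ≠ 0} := by
  unfold calGTwoZeroPrimitive
  fun_prop (disch := simp_all)

lemma calGTwoZeroPrimitive_one : calGTwoZeroPrimitive 1 = √3 - π := by
  have harctan : Real.arctan √3 = π / 3 := by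
    rw [← Real.tan_pi_div_three]
    exact Real.arctan_tan (by linarith [Real.pi_pos]) (by linarith [Real.pi_pos])
  norm_num [calGTwoZeroPrimitive, harctan]
  ring

lemma calGTwoZeroPrimitive_one_fourth : calGTwoZeroPrimitive (1 / 4) = 0 := by
  norm_num [calGTwoZeroPrimitive]

lemma integral_calGKernel_two_zero :
    ∫ t in (1/4 : ℝ)..1, 1 / √(4 * t - 1) * calGKernel 2 0 t = √3 - π := by
  have hIcc : Set.Icc (1 / 4 : ℝ) 1 ⊆ {t | t ≠ 0} := fun t ht =>
    (show (0 : ℝ) < t by linarith [ht.1]).ne'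
  have hint : IntervalIntegrable (fun t => 1 / √(4 * t - 1) * calGKernel 2 0 t)
      MeasureTheory.volume (1 / 4) 1 :=
    (intervalIntegrable_one_div_sqrt_four_mul_sub_one _ _).mul_continuousOn
      ((continuousOn_calGKernel 2 0).mono (by rwa [Set.uIcc_of_le (by norm_num)]))
  have hderiv : ∀ t ∈ Set.Ioo (1 / 4 : ℝ) 1, HasDerivWithinAt calGTwoZeroPrimitive
      (1 / √(4 * t - 1) * calGKernel 2 0 t) (Set.Ioi t) t := fun t ht => by
    rw [calGKernel_two_zero ht.1.le]
    exact (hasDerivAt_calGTwoZeroPrimitive ht.1).hasDerivWithinAt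
  rw [integral_eq_sub_of_hasDeriv_right_of_le (by norm_num)
      (continuousOn_calGTwoZeroPrimitive.mono hIcc) hderiv hint,
    calGTwoZeroPrimitive_one, calGTwoZeroPrimitive_one_fourth, sub_zero]

/-- `𝒢(2,0) = (3√3)/π − 3`. -/
theorem calG_two_zero : calG 2 0 = 3 * Real.sqrt 3 / Real.pi - 3 := by
  rw [calG_eq_integral_calGKernel, integral_calGKernel_two_zero]
  field_simp [Real.pi_ne_zero]
end

section
/- For all complex numbers u, w with u ≠ 0, w ≠ 0, u ≠ 1, w ≠ 1 and u ≠ w, the six-term rational expression u^{−1}w^{−1}/(1−u^{−1}) + u^{2}w^{−1}/(1−u w^{−1}) + u^{−1}w^{2}/(1−w) − u w^{−2}/(1−u w^{−1}) − u^{−2}w/(1−u^{−1}) − u w/(1−w) equals (u − w^{2})(u^{2} − w)(u w − 1) / ( u w (u−1)(u−w)(w−1) ). -/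
/-- The six-term rational expression arising from the signed sum over `D₃` factors as
`(u − w²)(u² − w)(uw − 1) / (uw(u−1)(u−w)(w−1))`. -/
theorem S_factorization (u w : ℂ) (hu0 : u ≠ 0) (hw0 : w ≠ 0) (hu1 : u ≠ 1) (hw1 : w ≠ 1)
    (huw : u ≠ w) :
    u⁻¹ * w⁻¹ / (1 - u⁻¹) + u ^ 2 * w⁻¹ / (1 - u * w⁻¹) + u⁻¹ * w ^ 2 / (1 - w)
      - u * (w ^ 2)⁻¹ / (1 - u * w⁻¹) - (u ^ 2)⁻¹ * w / (1 - u⁻¹) - u * w / (1 - w)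
    = (u - w ^ 2) * (u ^ 2 - w) * (u * w - 1) /
        (u * w * (u - 1) * (u - w) * (w - 1)) := by
  have hu1' : u - 1 ≠ 0 := sub_ne_zero.mpr hu1
  have hw1' : w - 1 ≠ 0 := sub_ne_zero.mpr hw1
  have huw' : u - w ≠ 0 := sub_ne_zero.mpr huw
  have hwu' : w - u ≠ 0 := sub_ne_zero.mpr (Ne.symm huw)
  have h1w : (1 : ℂ) - w ≠ 0 := sub_ne_zero.mpr (Ne.symm hw1)
  have t1 : u⁻¹ * w⁻¹ / (1 - u⁻¹) = 1 / (w * (u - 1)) := by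
    rw [show (1:ℂ) - u⁻¹ = (u - 1) / u by field_simp]
    field_simp; try ring
  have t2 : u ^ 2 * w⁻¹ / (1 - u * w⁻¹) = u ^ 2 / (w - u) := by
    rw [show (1:ℂ) - u * w⁻¹ = (w - u) / w by field_simp]
    field_simp; try ring
  have t3 : u⁻¹ * w ^ 2 / (1 - w) = w ^ 2 / (u * (1 - w)) := by
    field_simp; try ring
  have t4 : u * (w ^ 2)⁻¹ / (1 - u * w⁻¹) = u / (w * (w - u)) := by
    rw [show (1:ℂ) - u * w⁻¹ = (w - u) / w by field_simp]
    field_simp; try ring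
  have t5 : (u ^ 2)⁻¹ * w / (1 - u⁻¹) = w / (u * (u - 1)) := by
    rw [show (1:ℂ) - u⁻¹ = (u - 1) / u by field_simp]
    field_simp; try ring
  rw [t1, t2, t3, t4, t5]
  have hD : u * w * (u - 1) * (u - w) * (w - 1) ≠ 0 :=
    mul_ne_zero (mul_ne_zero (mul_ne_zero (mul_ne_zero hu0 hw0) hu1') huw') hw1'
  have hd1 : w * (u - 1) ≠ 0 := mul_ne_zero hw0 hu1'
  have hd3 : u * (1 - w) ≠ 0 := mul_ne_zero hu0 h1w
  have hd4 : w * (w - u) ≠ 0 := mul_ne_zero hw0 hwu'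
  have hd5 : u * (u - 1) ≠ 0 := mul_ne_zero hu0 hu1'
  rw [div_add_div _ _ hd1 hwu', div_add_div _ _ (mul_ne_zero hd1 hwu') hd3,
    div_sub_div _ _ (mul_ne_zero (mul_ne_zero hd1 hwu') hd3) hd4,
    div_sub_div _ _ (mul_ne_zero (mul_ne_zero (mul_ne_zero hd1 hwu') hd3) hd4) hd5,
    div_sub_div _ _ (mul_ne_zero (mul_ne_zero (mul_ne_zero (mul_ne_zero hd1 hwu') hd3) hd4) hd5) h1w,
    div_eq_div_iff (mul_ne_zero (mul_ne_zero (mul_ne_zero (mul_ne_zero (mul_ne_zero hd1 hwu') hd3) hd4) hd5) h1w) hD]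
  ring
end

section
/- For every integer n ≥ 1, the number of sequences (s_1, …, s_{3n}) with each s_i ∈ {(1,0), (−1,1), (0,−1)} ⊂ ℤ², such that every partial sum s_1 + ⋯ + s_k (for 1 ≤ k ≤ 3n) has both coordinates nonnegative and the total sum s_1 + ⋯ + s_{3n} equals (0,0), is exactly 2·(3n)! / ( n! · (n+1)! · (n+2)! ). -/
/-!
Let `W m p` be the number of quadrant walks of length `m` from the origin to `p`; splitting off
the last step gives `W (m + 1) p = ∑ₓ W m (p - x)` for `p` in the quadrant. Adding a box to row
1, 2 or 3 of a Young diagram with at most three rows moves `(λ₁ - λ₂, λ₂ - λ₃)` by `(1, 0)`,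
`(-1, 1)` or `(0, -1)`, so `W m (u, v)` counts standard Young tableaux of shape
`(c + v + u, c + v, c)`, where `m = 3c + 2v + u`. Accordingly, the hook length formula for that
shape satisfies the same recursion (by the branching rule, a polynomial identity) and has the same
initial values, so it computes `W`. For the shape `(n, n, n)` it gives
`2 (3n)! / (n! (n+1)! (n+2)!)`.
-/

open Finset

namespace LatticeWalk

variable {G : Type*} [AddGroup G]

def IsWalkIn (S : Finset G) (R : Set G) (l : List G) : Prop :=
  (∀ x ∈ l, x ∈ S) ∧ ∀ l', l' <+: l → l'.sum ∈ R

variable {S : Finset G} {R : Set G}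

theorem isWalkIn_nil (h0 : 0 ∈ R) : IsWalkIn S R [] := by
  simpa [IsWalkIn] using h0

theorem isWalkIn_append_singleton {l : List G} {x : G} :
    IsWalkIn S R (l ++ [x]) ↔ IsWalkIn S R l ∧ x ∈ S ∧ (l ++ [x]).sum ∈ R := by
  simp only [IsWalkIn, List.mem_append, List.mem_singleton, or_imp, forall_and,
    forall_eq, List.prefix_concat_iff]
  tauto

variable [DecidableEq G] [DecidablePred (· ∈ R)]

variable (S R) in
def walksTo : ℕ → G → Finset (List G)
  | 0, p => if p = 0 then {[]} else ∅
  | m + 1, p => if p ∈ R then S.biUnion fun x => (walksTo m (p - x)).image (· ++ [x]) else ∅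

theorem mem_walksTo (h0 : 0 ∈ R) {m : ℕ} {p : G} {l : List G} :
    l ∈ walksTo S R m p ↔ l.length = m ∧ IsWalkIn S R l ∧ l.sum = p := by
  induction m generalizing p l with
  | zero =>
    rw [walksTo, List.length_eq_zero_iff]
    split_ifs with hp
    · subst hp
      simp only [Finset.mem_singleton]
      constructor
      · rintro rfl
        exact ⟨rfl, isWalkIn_nil h0, List.sum_nil⟩
      · exact fun h => h.1
    · simp only [Finset.notMem_empty, false_iff]
      rintro ⟨rfl, -, rfl⟩
      exact hp List.sum_nil
  | succ m ih =>
    rcases l.eq_nil_or_concat' with rfl | ⟨l, x, rfl⟩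
    · simp only [walksTo]
      split_ifs <;> simp
    simp only [walksTo, List.length_append, List.length_singleton, Nat.add_right_cancel_iff,
      isWalkIn_append_singleton, List.sum_append, List.sum_singleton]
    split_ifs with hp
    · simp only [Finset.mem_biUnion, Finset.mem_image, ih, List.append_singleton_inj]
      constructor
      · rintro ⟨x, hx, l, ⟨hlen, hl, hsum⟩, rfl, rfl⟩
        obtain rfl : p = l.sum + x := by rw [hsum, sub_add_cancel]
        exact ⟨hlen, ⟨hl, hx, hp⟩, rfl⟩
      · rintro ⟨hlen, ⟨hl, hx, -⟩, rfl⟩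
        exact ⟨x, hx, l, ⟨hlen, hl, (add_sub_cancel_right _ _).symm⟩, rfl, rfl⟩
    · simp only [Finset.notMem_empty, false_iff]
      rintro ⟨-, ⟨-, -, hR⟩, rfl⟩
      exact hp hR

theorem walksTo_eq_empty_of_notMem (h0 : 0 ∈ R) {m : ℕ} {p : G} (hp : p ∉ R) :
    walksTo S R m p = ∅ := by
  cases m with
  | zero => rw [walksTo, if_neg (by rintro rfl; exact hp h0)]
  | succ m => rw [walksTo, if_neg hp]

theorem card_walksTo_succ (m : ℕ) (p : G) :
    #(walksTo S R (m + 1) p) = if p ∈ R then ∑ x ∈ S, #(walksTo S R m (p - x)) else 0 := by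
  rw [walksTo]
  split_ifs
  · rw [card_biUnion]
    · simp only [card_image_of_injective _ (List.append_left_injective _)]
    · intro x _ y _ hxy
      simp only [Function.onFun, Finset.disjoint_left, Finset.mem_image]
      rintro _ ⟨l, -, rfl⟩ ⟨l', -, h⟩
      exact hxy (List.append_singleton_inj.1 h).2.symm
  · rfl

end LatticeWalk

theorem List.forall_prefix_iff_forall_take {α : Type*} {P : List α → Prop} (hP : P [])
    {l : List α} : (∀ l', l' <+: l → P l') ↔ ∀ k, 1 ≤ k → k ≤ l.length → P (l.take k) := by
  refine ⟨fun h k _ _ => h _ (List.take_prefix k l), fun h l' hl' => ?_⟩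
  rcases eq_or_ne l' [] with rfl | hne
  · exact hP
  · rw [List.prefix_iff_eq_take.1 hl']
    exact h _ (List.length_pos_iff.2 hne) hl'.length_le

namespace QuadrantWalk

open LatticeWalk

def steps : Finset (ℤ × ℤ) := {(1, 0), (-1, 1), (0, -1)}

def quadrant : Set (ℤ × ℤ) := {p | 0 ≤ p}

instance : DecidablePred (· ∈ quadrant) := fun p => inferInstanceAs (Decidable (0 ≤ p))

theorem mem_quadrant {p : ℤ × ℤ} : p ∈ quadrant ↔ 0 ≤ p := Iff.rfl

def walkCount (m : ℕ) (p : ℤ × ℤ) : ℕ := #(walksTo steps quadrant m p)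

theorem walkCount_succ {m : ℕ} {p : ℤ × ℤ} (hp : 0 ≤ p) :
    walkCount (m + 1) p =
      walkCount m (p - (1, 0)) + walkCount m (p - (-1, 1)) + walkCount m (p - (0, -1)) := by
  rw [walkCount, card_walksTo_succ, if_pos (mem_quadrant.2 hp), steps, sum_insert (by decide),
    sum_insert (by decide), Finset.sum_singleton, add_assoc]
  rfl

theorem walkCount_eq_zero_of_not_nonneg {m : ℕ} {p : ℤ × ℤ} (hp : ¬ 0 ≤ p) :
    walkCount m p = 0 := by
  rw [walkCount, walksTo_eq_empty_of_notMem (mem_quadrant.2 le_rfl) (mt mem_quadrant.1 hp),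
    card_empty]

theorem sum_fst_add_two_mul_sum_snd_le_length {l : List (ℤ × ℤ)} (hl : ∀ x ∈ l, x ∈ steps) :
    l.sum.1 + 2 * l.sum.2 ≤ l.length := by
  induction l with
  | nil => simp
  | cons x l ih =>
    simp only [List.forall_mem_cons] at hl
    have hx : x.1 + 2 * x.2 ≤ 1 := by
      rcases (by simpa [steps] using hl.1 : x = (1, 0) ∨ x = (-1, 1) ∨ x = (0, -1))
        with rfl | rfl | rfl <;> norm_num
    simp only [List.sum_cons, Prod.fst_add, Prod.snd_add, List.length_cons]
    push_cast
    linarith [ih hl.2]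

theorem walkCount_eq_zero_of_lt {m : ℕ} {p : ℤ × ℤ} (h : (m : ℤ) < p.1 + 2 * p.2) :
    walkCount m p = 0 := by
  rw [walkCount, card_eq_zero, eq_empty_iff_forall_notMem]
  intro l hl
  obtain ⟨rfl, ⟨hS, -⟩, rfl⟩ := (mem_walksTo (mem_quadrant.2 le_rfl)).1 hl
  exact h.not_ge (sum_fst_add_two_mul_sum_snd_le_length hS)

open Nat

/-- The hook lengths of the shape `(c + v + u, c + v, c)` multiply to
`(c + v + u + 2)! (c + v + 1)! c! / ((u + 1) (v + 1) (u + v + 2))`. -/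
def HookFormula (m : ℕ) : Prop :=
  ∀ c v u : ℕ, 3 * c + 2 * v + u = m →
    (walkCount m (u, v) : ℤ) * ((c + v + u + 2)! * (c + v + 1)! * c !) =
      m ! * ((u + 1) * (v + 1) * (u + v + 2))

theorem hookFormula_zero : HookFormula 0 := by
  intro c v u h
  obtain ⟨rfl, rfl, rfl⟩ : c = 0 ∧ v = 0 ∧ u = 0 := by omega
  simp [walkCount, walksTo]

namespace HookFormula

variable {m c v u : ℕ}

theorem last_step_right (ih : HookFormula m) (h : 3 * c + 2 * v + u = m + 1) :
    (walkCount m (u - 1, v) : ℤ) * ((c + v + u + 2)! * (c + v + 1)! * c !) =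
      m ! * ((c + v + u + 2) * u * (u + v + 1) * (v + 1)) := by
  rcases u with _ | u
  · rw [walkCount_eq_zero_of_not_nonneg (by simp [Prod.le_def])]
    simp
  · have hu := ih c v u (by omega)
    rw [show c + v + (u + 1) + 2 = (c + v + u + 2) + 1 from rfl, factorial_succ]
    push_cast at hu ⊢
    rw [add_sub_cancel_right]
    linear_combination ((c : ℤ) + v + u + 3) * hu

theorem last_step_up_left (ih : HookFormula m) (h : 3 * c + 2 * v + u = m + 1) :
    (walkCount m (u + 1, v - 1) : ℤ) * ((c + v + u + 2)! * (c + v + 1)! * c !) =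
      m ! * ((c + v + 1) * (u + 2) * (u + v + 2) * v) := by
  rcases v with _ | v
  · rw [walkCount_eq_zero_of_not_nonneg (by simp [Prod.le_def])]
    simp
  · have hv := ih c v (u + 1) (by omega)
    rw [show c + (v + 1) + u + 2 = c + v + (u + 1) + 2 by omega,
      show c + (v + 1) + 1 = (c + v + 1) + 1 from rfl, factorial_succ (c + v + 1)]
    push_cast at hv ⊢
    rw [add_sub_cancel_right]
    linear_combination ((c : ℤ) + v + 2) * hv

theorem last_step_down (ih : HookFormula m) (h : 3 * c + 2 * v + u = m + 1) :
    (walkCount m (u, v + 1) : ℤ) * ((c + v + u + 2)! * (c + v + 1)! * c !) =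
      m ! * (c * (u + 1) * (u + v + 3) * (v + 2)) := by
  rcases c with _ | c
  · rw [walkCount_eq_zero_of_lt (by push_cast; omega)]
    simp
  · have hc := ih c (v + 1) u (by omega)
    rw [show c + 1 + v + u + 2 = c + (v + 1) + u + 2 by omega,
      show c + 1 + v + 1 = c + (v + 1) + 1 by omega, factorial_succ c]
    push_cast at hc ⊢
    linear_combination ((c : ℤ) + 1) * hc

end HookFormula

theorem hookFormula_succ {m : ℕ} (ih : HookFormula m) : HookFormula (m + 1) := by
  intro c v u h
  have hm : ((m + 1 : ℕ) : ℤ) = 3 * c + 2 * v + u := by rw [← h]; push_cast; ring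
  have h₁ := ih.last_step_right h
  have h₂ := ih.last_step_up_left h
  have h₃ := ih.last_step_down h
  rw [walkCount_succ (by simp [Prod.le_def]), factorial_succ m]
  simp only [Prod.mk_sub_mk, sub_zero, sub_neg_eq_add]
  push_cast at hm h₁ h₂ h₃ ⊢
  -- branching rule: the right-hand sides sum to `(3c + 2v + u) (u + 1) (v + 1) (u + v + 2)`
  linear_combination h₁ + h₂ + h₃ - (m ! : ℤ) * ((u + 1) * (v + 1) * (u + v + 2)) * hm

theorem hookFormula (m : ℕ) : HookFormula m :=
  Nat.rec hookFormula_zero (fun _ => hookFormula_succ) m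

theorem ofFn_mem_walksTo_iff {m : ℕ} {s : Fin m → ℤ × ℤ} :
    List.ofFn s ∈ walksTo steps quadrant m 0 ↔
      (∀ i, s i ∈ ({(1, 0), (-1, 1), (0, -1)} : Set (ℤ × ℤ))) ∧
        (∀ k, 1 ≤ k → k ≤ m →
          0 ≤ (∑ i ∈ Finset.univ.filter (fun i : Fin m => (i : ℕ) < k), s i).1 ∧
          0 ≤ (∑ i ∈ Finset.univ.filter (fun i : Fin m => (i : ℕ) < k), s i).2) ∧
        (∑ i, s i = 0) := by
  rw [mem_walksTo (mem_quadrant.2 le_rfl), IsWalkIn,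
    List.forall_prefix_iff_forall_take (mem_quadrant.2 le_rfl)]
  simp only [List.length_ofFn, List.forall_mem_ofFn_iff, List.sum_take_ofFn, List.sum_ofFn,
    mem_quadrant, Prod.le_def, Prod.fst_zero, Prod.snd_zero, steps, true_and, and_assoc,
    Finset.mem_insert, Finset.mem_singleton, Set.mem_insert_iff, Set.mem_singleton_iff]

theorem card_walks_eq_walkCount (m : ℕ) :
    Nat.card {s : Fin m → ℤ × ℤ //
        (∀ i, s i ∈ ({(1, 0), (-1, 1), (0, -1)} : Set (ℤ × ℤ))) ∧
        (∀ k, 1 ≤ k → k ≤ m →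
          0 ≤ (∑ i ∈ Finset.univ.filter (fun i : Fin m => (i : ℕ) < k), s i).1 ∧
          0 ≤ (∑ i ∈ Finset.univ.filter (fun i : Fin m => (i : ℕ) < k), s i).2) ∧
        (∑ i, s i = 0)} = walkCount m 0 := by
  rw [walkCount, ← Nat.card_eq_finsetCard]
  refine Nat.card_eq_of_bijective (fun s => ⟨List.ofFn s.1, ofFn_mem_walksTo_iff.2 s.2⟩)
    ⟨fun s t h => Subtype.ext (List.ofFn_injective (congrArg Subtype.val h)), ?_⟩
  rintro ⟨l, hl⟩
  obtain ⟨rfl, -⟩ := (mem_walksTo (mem_quadrant.2 le_rfl)).1 hl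
  exact ⟨⟨fun i => l[(i : ℕ)], ofFn_mem_walksTo_iff.1 (by rwa [List.ofFn_getElem])⟩,
    Subtype.ext List.ofFn_getElem⟩

end QuadrantWalk

theorem quadrant_walk_count_general (n : ℕ) :
    Nat.card {s : Fin (3 * n) → ℤ × ℤ //
        (∀ i, s i ∈ ({(1, 0), (-1, 1), (0, -1)} : Set (ℤ × ℤ))) ∧
        (∀ k, 1 ≤ k → k ≤ 3 * n →
          0 ≤ (∑ i ∈ Finset.univ.filter (fun i : Fin (3 * n) => (i : ℕ) < k), s i).1 ∧
          0 ≤ (∑ i ∈ Finset.univ.filter (fun i : Fin (3 * n) => (i : ℕ) < k), s i).2) ∧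
        (∑ i, s i = 0)} =
      2 * Nat.factorial (3 * n) /
        (Nat.factorial n * Nat.factorial (n + 1) * Nat.factorial (n + 2)) := by
  have hook := QuadrantWalk.hookFormula (3 * n) n 0 0 (by ring)
  rw [QuadrantWalk.card_walks_eq_walkCount]
  refine (Nat.div_eq_of_eq_mul_left (by positivity) ?_).symm
  simp only [Nat.cast_zero, Prod.mk_zero_zero] at hook
  zify
  linear_combination -hook

/-- The number of lattice paths of length `3n` in the nonnegative quadrant with steps
`(1,0)`, `(−1,1)`, `(0,−1)` starting and ending at the origin equals the 3-dimensional
Catalan number `2·(3n)! / (n!(n+1)!(n+2)!)`. -/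
theorem quadrant_walk_count (n : ℕ) (hn : 1 ≤ n) :
    Nat.card {s : Fin (3 * n) → ℤ × ℤ //
        (∀ i, s i ∈ ({(1, 0), (-1, 1), (0, -1)} : Set (ℤ × ℤ))) ∧
        (∀ k, 1 ≤ k → k ≤ 3 * n →
          0 ≤ (∑ i ∈ Finset.univ.filter (fun i : Fin (3 * n) => (i : ℕ) < k), s i).1 ∧
          0 ≤ (∑ i ∈ Finset.univ.filter (fun i : Fin (3 * n) => (i : ℕ) < k), s i).2) ∧
        (∑ i, s i = 0)} =
      2 * Nat.factorial (3 * n) /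
        (Nat.factorial n * Nat.factorial (n + 1) * Nat.factorial (n + 2)) :=
  quadrant_walk_count_general n
end
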